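/- With the subdivision setup below, for n ≥ 2 and each fixed i ∈ Fin e', the average over σ ∈ S of the squared radius of gyration of the intermediate point cloud X^σ_i = (x^σ_{i,1},…,x^σ_{i,n−1}) satisfies (1/#S) Σ_{σ∈S} Rg²(X^σ_i) = (n(n+1)(n−2)/(12(n−1)²))·Rg²(W_i) + ((n−2)/(12n))·‖w'_i‖², where W_i = (w(i,1),…,w(i,n)) is regarded as a point cloud in ℝ^d with unit weights. -/

import Mathlib

/-!
Only the coordinate `σ i` matters and translations do not change `Rg²`, so the claim is about
the average over `τ ∈ S_n` of `Rg²` of the prefix sums `y_j = ∑_{k ≤ j} w(i, τ k)`. Averaged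
over `S_n`, `⟪w(τ k), w(τ l)⟫` becomes `∑‖w‖² / n` if `k = l` and
`(‖w'‖² - ∑‖w‖²) / (n (n - 1))` otherwise. So for a cloud `v ↦ ∑_k c v k • w(τ k)` with
fixed coefficients, the average `Rg²` only involves `‖w'‖²`, `Rg²(W)` and the variances of the
row sums and of the columns of `c`; for the staircase `c j k = [k ≤ j]` on `n - 1` rows these
are `((n-1)² - 1) / 12` and, summed over the columns, `((n-1)² - 1) / (6 (n-1))`.
-/

open Finset

/-- Center of mass of a weighted point cloud. -/
noncomputable def com {V : Type*} [Fintype V] {d : ℕ}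
    (X : V → EuclideanSpace ℝ (Fin d)) (Ω : V → ℝ) : EuclideanSpace ℝ (Fin d) :=
  (∑ v, Ω v)⁻¹ • ∑ v, Ω v • X v

/-- Weighted squared radius of gyration of a point cloud. -/
noncomputable def rg2 {V : Type*} [Fintype V] {d : ℕ}
    (X : V → EuclideanSpace ℝ (Fin d)) (Ω : V → ℝ) : ℝ :=
  (∑ v, Ω v)⁻¹ * ∑ v, Ω v * ‖X v - com X Ω‖ ^ 2

/-- Center of mass with unit weights. -/
noncomputable def uMu {V : Type*} [Fintype V] {d : ℕ}
    (X : V → EuclideanSpace ℝ (Fin d)) : EuclideanSpace ℝ (Fin d) :=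
  (Fintype.card V : ℝ)⁻¹ • ∑ v, X v

/-- Squared radius of gyration with unit weights. -/
noncomputable def uRg2 {V : Type*} [Fintype V] {d : ℕ}
    (X : V → EuclideanSpace ℝ (Fin d)) : ℝ :=
  (Fintype.card V : ℝ)⁻¹ * ∑ v, ‖X v - uMu X‖ ^ 2

/-- Position of the `j`-th intermediate vertex (1-indexed position `j+1`) on the
subdivided edge `i`, for the permuted displacement vectors: `x^σ_{i,j}` equals
`X'(tail i)` plus the first `j+1` permuted displacements. -/
noncomputable def xpos {d n v' e' : ℕ}
    (X' : Fin v' → EuclideanSpace ℝ (Fin d)) (tl : Fin e' → Fin v')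
    (w : Fin e' → Fin n → EuclideanSpace ℝ (Fin d))
    (σ : Fin e' → Equiv.Perm (Fin n)) (i : Fin e') (j : Fin (n - 1)) :
    EuclideanSpace ℝ (Fin d) :=
  X' (tl i) + ∑ k : Fin n, if (k : ℕ) ≤ (j : ℕ) then w i (σ i k) else 0

open Equiv
open scoped InnerProductSpace Nat

theorem sum_perm_apply_apply_eq_of_iff {α M : Type*} [Fintype α] [DecidableEq α]
    [AddCommMonoid M] (g : α → α → M) {k l k' l' : α} (h : k = l ↔ k' = l') :
    ∑ τ : Perm α, g (τ k) (τ l) = ∑ τ : Perm α, g (τ k') (τ l') := by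
  obtain ⟨π, hk, hl⟩ : ∃ π : Perm α, π k' = k ∧ π l' = l := by
    by_cases hkl : k' = l'
    · subst hkl
      exact ⟨swap k' k, swap_apply_left _ _, by rw [← h.mpr rfl, swap_apply_left]⟩
    · simpa using MulAction.is_two_pretransitive_iff.mp (Perm.isMultiplyPretransitive α 2)
        hkl (mt h.mp hkl)
  simpa [Perm.mul_apply, hk, hl] using
    Equiv.sum_comp (Equiv.mulRight π) fun τ => g (τ k') (τ l')

theorem card_mul_sum_perm_apply_apply {α R : Type*} [Fintype α] [DecidableEq α] [CommRing R]
    (g : α → α → R) (k l : α) :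
    (Fintype.card α * (Fintype.card α - 1) : R) * ∑ τ : Perm α, g (τ k) (τ l) =
      (Fintype.card α)! * (∑ p, ∑ q, g p q - ∑ p, g p p +
        if k = l then Fintype.card α * ∑ p, g p p - ∑ p, ∑ q, g p q else 0) := by
  have hS : ∀ {k l k' l' : α}, (k = l ↔ k' = l') →
      ∑ τ : Perm α, g (τ k) (τ l) = ∑ τ : Perm α, g (τ k') (τ l') :=
    sum_perm_apply_apply_eq_of_iff g
  have hdiag : (Fintype.card α : R) * ∑ τ : Perm α, g (τ k) (τ k) =
      (Fintype.card α)! * ∑ p, g p p := calc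
    _ = ∑ k', ∑ τ : Perm α, g (τ k') (τ k') := by
      simp [fun k' => hS (k := k') (l := k') (k' := k) (l' := k) (by simp)]
    _ = ∑ τ : Perm α, ∑ k', g (τ k') (τ k') := sum_comm
    _ = (Fintype.card α)! * ∑ p, g p p := by
      simp [fun τ : Perm α => Equiv.sum_comp τ fun p => g p p, Fintype.card_perm]
  have hall : ∑ k', ∑ l', ∑ τ : Perm α, g (τ k') (τ l') =
      (Fintype.card α)! * ∑ p, ∑ q, g p q := calc
    _ = ∑ τ : Perm α, ∑ k', ∑ l', g (τ k') (τ l') := by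
      simp only [sum_comm (γ := Perm α)]
    _ = (Fintype.card α)! * ∑ p, ∑ q, g p q := by
      simp [fun (τ : Perm α) k' => Equiv.sum_comp τ (g (τ k')),
        fun τ : Perm α => Equiv.sum_comp τ fun p => ∑ q, g p q, Fintype.card_perm]
  split_ifs with hkl
  · subst hkl
    linear_combination (Fintype.card α - 1 : R) * hdiag
  · have hoff : ∀ k' l', ∑ τ : Perm α, g (τ k') (τ l') = ∑ τ : Perm α, g (τ k) (τ l) +
        if k' = l' then ∑ τ : Perm α, g (τ k) (τ k) - ∑ τ : Perm α, g (τ k) (τ l) else 0 := by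
      intro k' l'
      split_ifs with h
      · rw [hS (k' := k) (l' := k) (by simp [h])]; ring
      · rw [hS (k' := k) (l' := l) (by simp [h, hkl])]; ring
    rw [sum_congr rfl fun k' _ => sum_congr rfl fun l' _ => hoff k' l'] at hall
    simp only [sum_add_distrib, Finset.sum_ite_eq, mem_univ, if_true, sum_const,
      card_univ, nsmul_eq_mul] at hall
    linear_combination hall - hdiag

theorem norm_sum_sq_eq_sum_sum_inner {ι E : Type*} [Fintype ι] [NormedAddCommGroup E]
    [InnerProductSpace ℝ E] (b : ι → E) : ‖∑ k, b k‖ ^ 2 = ∑ k, ∑ l, ⟪b k, b l⟫_ℝ := by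
  rw [← real_inner_self_eq_norm_sq, sum_inner]
  simp only [inner_sum]

theorem card_mul_sum_perm_norm_sum_smul_sq {α E : Type*} [Fintype α] [DecidableEq α]
    [NormedAddCommGroup E] [InnerProductSpace ℝ E] (c : α → ℝ) (a : α → E) :
    (Fintype.card α * (Fintype.card α - 1) : ℝ) * ∑ τ : Perm α, ‖∑ k, c k • a (τ k)‖ ^ 2 =
      (Fintype.card α)! * ((‖∑ p, a p‖ ^ 2 - ∑ p, ‖a p‖ ^ 2) * (∑ k, c k) ^ 2 +
        (Fintype.card α * ∑ p, ‖a p‖ ^ 2 - ‖∑ p, a p‖ ^ 2) * ∑ k, c k ^ 2) := by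
  set n : ℝ := (Fintype.card α : ℝ)
  calc n * (n - 1) * ∑ τ : Perm α, ‖∑ k, c k • a (τ k)‖ ^ 2
      = ∑ k, ∑ l, c k * c l * (n * (n - 1) * ∑ τ : Perm α, ⟪a (τ k), a (τ l)⟫_ℝ) := by
        simp only [norm_sum_sq_eq_sum_sum_inner, real_inner_smul_left, real_inner_smul_right,
          mul_sum]
        rw [sum_comm]
        refine sum_congr rfl fun k _ => ?_
        rw [sum_comm]
        exact sum_congr rfl fun l _ => sum_congr rfl fun τ _ => by ring
    _ = ∑ k, ∑ l, c k * c l * ((Fintype.card α)! * (‖∑ p, a p‖ ^ 2 - ∑ p, ‖a p‖ ^ 2 +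
          if k = l then n * ∑ p, ‖a p‖ ^ 2 - ‖∑ p, a p‖ ^ 2 else 0)) := by
        simp only [card_mul_sum_perm_apply_apply (fun p q => ⟪a p, a q⟫_ℝ),
          real_inner_self_eq_norm_sq, norm_sum_sq_eq_sum_sum_inner, n]
    _ = _ := by
        simp only [mul_add, mul_ite, mul_zero, sum_add_distrib, Finset.sum_ite_eq, mem_univ,
          if_true, ← sum_mul, ← mul_sum, sq]
        ring

theorem card_pi_inv_mul_sum_apply {ι G : Type*} [Fintype ι] [DecidableEq ι] [Fintype G]
    [Nonempty G] (i : ι) (F : G → ℝ) :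
    (Fintype.card (ι → G) : ℝ)⁻¹ * ∑ σ : ι → G, F (σ i) = (Fintype.card G : ℝ)⁻¹ * ∑ g, F g := by
  have hrest : (Fintype.card ({ j // j ≠ i } → G) : ℝ) ≠ 0 :=
    Nat.cast_ne_zero.mpr Fintype.card_ne_zero
  rw [← (funSplitAt i G).symm.sum_comp, Fintype.sum_prod_type,
    Fintype.card_congr (funSplitAt i G), Fintype.card_prod]
  simp only [funSplitAt_symm_apply, dite_true, sum_const, card_univ, nsmul_eq_mul, ← mul_sum]
  push_cast
  field_simp

section UnitWeights

variable {V : Type*} [Fintype V] {d : ℕ}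

theorem sum_eq_card_smul_uMu [Nonempty V] (X : V → EuclideanSpace ℝ (Fin d)) :
    ∑ v, X v = (Fintype.card V : ℝ) • uMu X := by
  rw [uMu, smul_inv_smul₀ (Nat.cast_ne_zero.mpr Fintype.card_ne_zero)]

theorem uMu_const_add [Nonempty V] (c : EuclideanSpace ℝ (Fin d))
    (X : V → EuclideanSpace ℝ (Fin d)) : uMu (fun v => c + X v) = c + uMu X := by
  rw [uMu, sum_add_distrib, sum_eq_card_smul_uMu X, sum_const, card_univ,
    ← Nat.cast_smul_eq_nsmul ℝ, ← smul_add,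
    inv_smul_smul₀ (Nat.cast_ne_zero.mpr Fintype.card_ne_zero)]

theorem uRg2_const_add [Nonempty V] (c : EuclideanSpace ℝ (Fin d))
    (X : V → EuclideanSpace ℝ (Fin d)) : uRg2 (fun v => c + X v) = uRg2 X := by
  simp only [uRg2, uMu_const_add, add_sub_add_left_eq_sub]

theorem uRg2_eq_sub [Nonempty V] (X : V → EuclideanSpace ℝ (Fin d)) :
    uRg2 X = (Fintype.card V : ℝ)⁻¹ * ∑ v, ‖X v‖ ^ 2 - ‖uMu X‖ ^ 2 := by
  have hV : (Fintype.card V : ℝ) ≠ 0 := Nat.cast_ne_zero.mpr Fintype.card_ne_zero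
  have hcross : ∑ v, ⟪X v, uMu X⟫_ℝ = Fintype.card V * ‖uMu X‖ ^ 2 := by
    rw [← sum_inner, sum_eq_card_smul_uMu, real_inner_smul_left, real_inner_self_eq_norm_sq]
  simp only [uRg2, norm_sub_sq_real, sum_add_distrib, sum_sub_distrib, ← mul_sum, hcross,
    sum_const, card_univ, nsmul_eq_mul]
  field_simp
  ring

theorem uMu_sum_smul {α : Type*} [Fintype α] (c : V → α → ℝ)
    (b : α → EuclideanSpace ℝ (Fin d)) :
    uMu (fun v => ∑ k, c v k • b k) = ∑ k, ((Fintype.card V : ℝ)⁻¹ * ∑ v, c v k) • b k := by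
  simp only [uMu, smul_sum, sum_smul, mul_smul]
  exact sum_comm

/-- The two bracketed factors on the right are the variance over `v` of the row sums of `c`
and the sum of the variances of its columns. -/
theorem card_mul_sum_perm_uRg2 [Nonempty V] {α : Type*} [Fintype α] [DecidableEq α]
    (c : V → α → ℝ) (a : α → EuclideanSpace ℝ (Fin d)) :
    (Fintype.card α * (Fintype.card α - 1) : ℝ) *
        ∑ τ : Perm α, uRg2 (fun v => ∑ k, c v k • a (τ k)) =
      (Fintype.card α)! *
        ((‖∑ p, a p‖ ^ 2 - ∑ p, ‖a p‖ ^ 2) *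
            ((Fintype.card V : ℝ)⁻¹ * ∑ v, (∑ k, c v k) ^ 2 -
              ((Fintype.card V : ℝ)⁻¹ * ∑ v, ∑ k, c v k) ^ 2) +
          (Fintype.card α * ∑ p, ‖a p‖ ^ 2 - ‖∑ p, a p‖ ^ 2) *
            ((Fintype.card V : ℝ)⁻¹ * ∑ v, ∑ k, c v k ^ 2 -
              ∑ k, ((Fintype.card V : ℝ)⁻¹ * ∑ v, c v k) ^ 2)) := by
  set n : ℝ := (Fintype.card α : ℝ)
  set m : ℝ := (Fintype.card V : ℝ)
  calc n * (n - 1) * ∑ τ : Perm α, uRg2 (fun v => ∑ k, c v k • a (τ k))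
      = m⁻¹ * ∑ v, n * (n - 1) * ∑ τ : Perm α, ‖∑ k, c v k • a (τ k)‖ ^ 2 -
          n * (n - 1) * ∑ τ : Perm α, ‖∑ k, (m⁻¹ * ∑ v, c v k) • a (τ k)‖ ^ 2 := by
        simp only [uRg2_eq_sub, uMu_sum_smul, sum_sub_distrib, ← mul_sum]
        rw [sum_comm]
        ring
    _ = _ := by
        simp only [card_mul_sum_perm_norm_sum_smul_sq, n]
        simp only [← mul_sum, sum_comm (γ := α), sum_add_distrib]
        ring

end UnitWeights

def prefixIndicator (m n : ℕ) (j : Fin m) (k : Fin n) : ℝ := if (k : ℕ) ≤ j then 1 else 0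

theorem sum_fin_val_add_one (m : ℕ) : ∑ j : Fin m, ((j : ℝ) + 1) = (m : ℝ) * (m + 1) / 2 := by
  induction m with
  | zero => simp
  | succ m ih =>
    rw [Fin.sum_univ_castSucc]
    simp only [Fin.val_castSucc, Fin.val_last, ih]
    push_cast; ring

theorem sum_fin_val_add_one_sq (m : ℕ) :
    ∑ j : Fin m, ((j : ℝ) + 1) ^ 2 = (m : ℝ) * (m + 1) * (2 * m + 1) / 6 := by
  induction m with
  | zero => simp
  | succ m ih =>
    rw [Fin.sum_univ_castSucc]
    simp only [Fin.val_castSucc, Fin.val_last, ih]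
    push_cast; ring

theorem sum_prefixIndicator_row {m n : ℕ} (h : m ≤ n) (j : Fin m) :
    ∑ k, prefixIndicator m n j k = (j : ℝ) + 1 := by
  have hfilter : (range n).filter (· ≤ (j : ℕ)) = range (j + 1) := by
    ext k; simp only [mem_filter, mem_range]; omega
  simp only [prefixIndicator]
  rw [Fin.sum_univ_eq_sum_range (fun k => if k ≤ (j : ℕ) then (1 : ℝ) else 0), sum_boole,
    hfilter, card_range]
  push_cast; ring

theorem sum_prefixIndicator_col (m : ℕ) {n : ℕ} (k : Fin n) :
    ∑ j, prefixIndicator m n j k = ((m - k : ℕ) : ℝ) := by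
  have hfilter : (range m).filter ((k : ℕ) ≤ ·) = Ico (k : ℕ) m := by
    ext j; simp only [mem_filter, mem_range, mem_Ico]; omega
  simp only [prefixIndicator]
  rw [Fin.sum_univ_eq_sum_range (fun j => if (k : ℕ) ≤ j then (1 : ℝ) else 0), sum_boole,
    hfilter, Nat.card_Ico]

theorem prefixIndicator_row_variance {m n : ℕ} (hm : m ≠ 0) (h : m ≤ n) :
    (m : ℝ)⁻¹ * ∑ j, (∑ k, prefixIndicator m n j k) ^ 2 -
        ((m : ℝ)⁻¹ * ∑ j, ∑ k, prefixIndicator m n j k) ^ 2 = ((m : ℝ) ^ 2 - 1) / 12 := by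
  simp only [sum_prefixIndicator_row h, sum_fin_val_add_one, sum_fin_val_add_one_sq]
  field_simp
  ring

theorem prefixIndicator_col_variance {m n : ℕ} (h : m + 1 = n) :
    (m : ℝ)⁻¹ * ∑ j, ∑ k, prefixIndicator m n j k ^ 2 -
        ∑ k, ((m : ℝ)⁻¹ * ∑ j, prefixIndicator m n j k) ^ 2 = ((m : ℝ) ^ 2 - 1) / (6 * m) := by
  subst h
  have hsq : ∀ j k, prefixIndicator m (m + 1) j k ^ 2 = prefixIndicator m (m + 1) j k := by
    intro j k; simp only [prefixIndicator]; split_ifs <;> norm_num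
  have hcol : ∑ k : Fin (m + 1), ((m - k : ℕ) : ℝ) ^ 2 = ∑ j : Fin m, ((j : ℝ) + 1) ^ 2 := by
    rw [← Equiv.sum_comp Fin.revPerm, Fin.sum_univ_succ]
    simp [Fin.val_rev]
  simp only [hsq, sum_prefixIndicator_row (Nat.le_succ m), sum_prefixIndicator_col, mul_pow,
    ← mul_sum, hcol, sum_fin_val_add_one, sum_fin_val_add_one_sq]
  rcases eq_or_ne m 0 with rfl | hm
  · simp
  field_simp
  ring

theorem average_rg2_intermediate_cloud_general {d n v' e' : ℕ} (hn : 2 ≤ n)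
    (head tl : Fin e' → Fin v')
    (X' : Fin v' → EuclideanSpace ℝ (Fin d))
    (w : Fin e' → Fin n → EuclideanSpace ℝ (Fin d))
    (hw : ∀ i, ∑ j, w i j = X' (head i) - X' (tl i))
    (i : Fin e') :
    (Fintype.card (Fin e' → Equiv.Perm (Fin n)) : ℝ)⁻¹ *
        ∑ σ : Fin e' → Equiv.Perm (Fin n),
          uRg2 (fun j : Fin (n - 1) => xpos X' tl w σ i j)
      = ((n : ℝ) * ((n : ℝ) + 1) * ((n : ℝ) - 2) / (12 * ((n : ℝ) - 1) ^ 2)) *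
          uRg2 (w i)
        + (((n : ℝ) - 2) / (12 * (n : ℝ))) * ‖X' (head i) - X' (tl i)‖ ^ 2 := by
  have : NeZero n := ⟨by omega⟩
  have : Nonempty (Fin (n - 1)) := ⟨⟨0, by omega⟩⟩
  have hcloud : ∀ σ : Fin e' → Perm (Fin n), uRg2 (fun j => xpos X' tl w σ i j) =
      uRg2 (fun j => ∑ k, prefixIndicator (n - 1) n j k • w i (σ i k)) := fun σ => by
    simp only [xpos, prefixIndicator, boole_smul]
    exact uRg2_const_add _ _
  rw [sum_congr rfl fun σ _ => hcloud σ, card_pi_inv_mul_sum_apply i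
    (fun τ : Perm (Fin n) => uRg2 fun j => ∑ k, prefixIndicator (n - 1) n j k • w i (τ k))]
  have haverage := card_mul_sum_perm_uRg2 (prefixIndicator (n - 1) n) (w i)
  rw [Fintype.card_fin, Fintype.card_fin, prefixIndicator_row_variance (by omega) (by omega),
    prefixIndicator_col_variance (by omega), hw i, Nat.cast_sub (by omega)] at haverage
  rw [uRg2_eq_sub, uMu, norm_smul, hw i, Fintype.card_perm, Fintype.card_fin, norm_inv,
    Real.norm_natCast]
  have hn' : (2 : ℝ) ≤ n := by exact_mod_cast hn
  have hn0 : (n : ℝ) ≠ 0 := by positivity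
  have hn1 : (n : ℝ) - 1 ≠ 0 := by linarith
  rw [inv_mul_eq_div, div_eq_iff (by positivity)]
  refine mul_left_cancel₀ (mul_ne_zero hn0 hn1) ?_
  rw [haverage]
  push_cast
  field_simp
  ring

/-- The average over `σ ∈ S = (S_n)^{e'}` of the squared radius of gyration of the
intermediate point cloud `X^σ_i = (x^σ_{i,1},…,x^σ_{i,n−1})` equals
`(n(n+1)(n−2)/(12(n−1)²))·Rg²(Wᵢ) + ((n−2)/(12n))·‖w'ᵢ‖²`. -/
theorem average_rg2_intermediate_cloud {d n v' e' : ℕ} (hd : 1 ≤ d) (hn : 2 ≤ n)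
    (head tl : Fin e' → Fin v')
    (X' : Fin v' → EuclideanSpace ℝ (Fin d))
    (w : Fin e' → Fin n → EuclideanSpace ℝ (Fin d))
    (hw : ∀ i, ∑ j, w i j = X' (head i) - X' (tl i))
    (i : Fin e') :
    (Fintype.card (Fin e' → Equiv.Perm (Fin n)) : ℝ)⁻¹ *
        ∑ σ : Fin e' → Equiv.Perm (Fin n),
          uRg2 (fun j : Fin (n - 1) => xpos X' tl w σ i j)
      = ((n : ℝ) * ((n : ℝ) + 1) * ((n : ℝ) - 2) / (12 * ((n : ℝ) - 1) ^ 2)) *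
          uRg2 (w i)
        + (((n : ℝ) - 2) / (12 * (n : ℝ))) * ‖X' (head i) - X' (tl i)‖ ^ 2 :=
  average_rg2_intermediate_cloud_general hn head tl X' w hw i
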